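/- Let λ be an infinite set, let k ≥ 2, and let Y ⊆ λ^k be mutually algebraic. Then Y is monadically definable if and only if Y \ Δ_k is finite. -/

import Mathlib

open FirstOrder

/-- `Y ⊆ λ^k` is mutually algebraic if there is `m` such that every `a ∈ λ` occurs as a
coordinate of at most `m` tuples of `Y`. -/
def MutuallyAlgebraic {lam : Type*} {k : ℕ} (Y : Set (Fin k → lam)) : Prop :=
  ∃ m : ℕ, ∀ a : lam,
    {x ∈ Y | ∃ i, x i = a}.Finite ∧ {x ∈ Y | ∃ i, x i = a}.ncard ≤ m

/-- `Δ_k`, the set of constant `k`-tuples. -/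
def Delta (lam : Type*) (k : ℕ) : Set (Fin k → lam) := {x | ∀ i j, x i = x j}

/-- A language is monadic if it has no function or constant symbols and all relation symbols
are unary. -/
def IsMonadicLanguage (L : Language) : Prop :=
  (∀ n, IsEmpty (L.Functions n)) ∧ ∀ n, n ≠ 1 → IsEmpty (L.Relations n)

/-- `Y ⊆ λ^k` is monadically definable if it is definable with parameters in some monadic
structure on `λ`. -/
def MonadicallyDefinable.{u, v, w} {lam : Type w} {k : ℕ} (Y : Set (Fin k → lam)) : Prop :=
  ∃ (L : FirstOrder.Language.{u, v}) (_ : IsMonadicLanguage L) (S : L.Structure lam),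
    @Set.Definable lam Set.univ L S (Fin k) Y


/-!
A formula of a monadic language with parameters mentions only finitely many parameters `C` and
finitely many unary predicates `U`, so the set it defines is invariant under every permutation of
`λ` that fixes `C` pointwise and preserves the predicates in `U`; in particular under the swap of
two points outside `C` of the same `U`-colour. If `Y \ Δ_k` were infinite, some non-constant
`x ∈ Y` would have a coordinate `a ∉ C` whose colour class is infinite; swapping `a` with the
other points of its class gives infinitely many tuples of `Y` through a coordinate `b ≠ a` of `x`,
contradicting mutual algebraicity. Conversely, if `Y \ Δ_k` is finite, `Y` is that finite set
together with the constant tuples `(a, …, a)` with `a` in the unary predicate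
`{a | (a, …, a) ∈ Y}`.
-/

namespace FirstOrder.Language

open Structure

variable {L : Language} {M : Type*} [L.Structure M] {α : Type*}

structure IsSymmetryOn (U : Set (L.Relations 1)) (C : Set M) (g : M ≃ M) : Prop where
  apply_eq : ∀ y ∈ C, g y = y
  relMap_comp_iff : ∀ R ∈ U, ∀ xs : Fin 1 → M, RelMap R (g ∘ xs) ↔ RelMap R xs

theorem IsSymmetryOn.mono {U U' : Set (L.Relations 1)} {C C' : Set M} {g : M ≃ M}
    (h : IsSymmetryOn U C g) (hU : U' ⊆ U) (hC : C' ⊆ C) : IsSymmetryOn U' C' g :=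
  ⟨fun y hy => h.apply_eq y (hC hy), fun R hR => h.relMap_comp_iff R (hU hR)⟩

theorem isSymmetryOn_swap [DecidableEq M] {U : Set (L.Relations 1)} {C : Set M} {a c : M}
    (ha : a ∉ C) (hc : c ∉ C) (hac : ∀ R ∈ U, RelMap R (fun _ : Fin 1 => a) ↔ RelMap R fun _ => c) :
    IsSymmetryOn U C (Equiv.swap a c) := by
  refine ⟨fun y hy => Equiv.swap_apply_of_ne_of_ne (ne_of_mem_of_not_mem hy ha)
    (ne_of_mem_of_not_mem hy hc), fun R hR xs => ?_⟩
  obtain ⟨b, rfl⟩ : ∃ b, xs = fun _ => b :=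
    ⟨xs 0, funext fun i => congrArg xs (Subsingleton.elim i 0)⟩
  change RelMap R (fun _ => Equiv.swap a c b) ↔ _
  rw [Equiv.swap_apply_def]
  split_ifs with h₁ h₂
  · rw [h₁]; exact (hac R hR).symm
  · rw [h₂]; exact hac R hR
  · rfl

theorem Term.exists_finite_realize_comp (hF : ∀ n, IsEmpty (L.Functions (n + 1)))
    (t : L.Term α) : ∃ C : Set M, C.Finite ∧
      ∀ g : M → M, (∀ y ∈ C, g y = y) → ∀ v : α → M, t.realize (g ∘ v) = g (t.realize v) := by
  cases t with
  | var i => exact ⟨∅, Set.finite_empty, fun g _ v => rfl⟩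
  | @func l f ts =>
    cases l with
    | zero =>
      have hconst : ∀ v : α → M, (func f ts).realize v = funMap f default := fun v =>
        congrArg (funMap f) (Subsingleton.elim _ _)
      refine ⟨{funMap f default}, Set.finite_singleton _, fun g hg v => ?_⟩
      rw [hconst, hconst, hg _ rfl]
    | succ n => exact (hF n).elim f

theorem BoundedFormula.exists_finite_realize_comp_iff (hF : ∀ n, IsEmpty (L.Functions (n + 1)))
    (hR : ∀ n, n ≠ 1 → IsEmpty (L.Relations n)) {n : ℕ} (φ : L.BoundedFormula α n) :
    ∃ (U : Set (L.Relations 1)) (C : Set M), U.Finite ∧ C.Finite ∧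
      ∀ g : M ≃ M, IsSymmetryOn U C g →
        ∀ (v : α → M) (xs : Fin n → M), φ.Realize (g ∘ v) (g ∘ xs) ↔ φ.Realize v xs := by
  induction φ with
  | falsum => exact ⟨∅, ∅, Set.finite_empty, Set.finite_empty, fun _ _ _ _ => Iff.rfl⟩
  | equal t₁ t₂ =>
    obtain ⟨C₁, hC₁, h₁⟩ := t₁.exists_finite_realize_comp (M := M) hF
    obtain ⟨C₂, hC₂, h₂⟩ := t₂.exists_finite_realize_comp (M := M) hF
    refine ⟨∅, C₁ ∪ C₂, Set.finite_empty, hC₁.union hC₂, fun g hg v xs => ?_⟩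
    have hfix₁ := (hg.mono subset_rfl Set.subset_union_left).apply_eq
    have hfix₂ := (hg.mono subset_rfl Set.subset_union_right).apply_eq
    simp only [BoundedFormula.Realize, ← Sum.comp_elim, h₁ g hfix₁, h₂ g hfix₂, g.apply_eq_iff_eq]
  | @rel m l R ts =>
    rcases eq_or_ne l 1 with rfl | hl
    · obtain ⟨C, hC, h⟩ := (ts 0).exists_finite_realize_comp (M := M) hF
      refine ⟨{R}, C, Set.finite_singleton _, hC, fun g hg v xs => ?_⟩
      have hts : ts = fun _ => ts 0 := funext fun i => congrArg ts (Subsingleton.elim i 0)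
      rw [hts]
      simp only [BoundedFormula.Realize, ← Sum.comp_elim, h g hg.apply_eq]
      exact hg.relMap_comp_iff R rfl _
    · exact (hR l hl).elim R
  | imp φ ψ ihφ ihψ =>
    obtain ⟨U₁, C₁, hU₁, hC₁, h₁⟩ := ihφ
    obtain ⟨U₂, C₂, hU₂, hC₂, h₂⟩ := ihψ
    refine ⟨U₁ ∪ U₂, C₁ ∪ C₂, hU₁.union hU₂, hC₁.union hC₂, fun g hg v xs => ?_⟩
    rw [BoundedFormula.realize_imp, BoundedFormula.realize_imp,
      h₁ g (hg.mono Set.subset_union_left Set.subset_union_left),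
      h₂ g (hg.mono Set.subset_union_right Set.subset_union_right)]
  | all φ ih =>
    obtain ⟨U, C, hU, hC, h⟩ := ih
    refine ⟨U, C, hU, hC, fun g hg v xs => ?_⟩
    simp only [BoundedFormula.realize_all]
    refine ⟨fun H a => ?_, fun H a => ?_⟩
    · simpa only [← Fin.comp_snoc, h g hg] using H (g a)
    · obtain ⟨b, rfl⟩ := g.surjective a
      simpa only [← Fin.comp_snoc, h g hg] using H b

end FirstOrder.Language

theorem IsMonadicLanguage.isEmpty_withConstants_functions_succ {L : Language} {M : Type*}
    (hL : IsMonadicLanguage L) (A : Set M) (n : ℕ) : IsEmpty (L[[A]].Functions (n + 1)) :=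
  have := hL.1 (n + 1)
  inferInstanceAs (IsEmpty (L.Functions (n + 1) ⊕ _))

theorem IsMonadicLanguage.isEmpty_withConstants_relations {L : Language} {M : Type*}
    (hL : IsMonadicLanguage L) (A : Set M) {n : ℕ} (hn : n ≠ 1) :
    IsEmpty (L[[A]].Relations n) :=
  have := hL.2 n hn
  inferInstanceAs (IsEmpty (L.Relations n ⊕ Empty))

open FirstOrder.Language in
theorem Set.Definable.exists_finite_isSymmetryOn_comp_mem {L : Language} {M : Type*}
    [L.Structure M] {A : Set M} {α : Type*} {Y : Set (α → M)} (hL : IsMonadicLanguage L)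
    (h : A.Definable L Y) :
    ∃ (U : Set (L[[A]].Relations 1)) (C : Set M), U.Finite ∧ C.Finite ∧
      ∀ g : M ≃ M, IsSymmetryOn U C g → ∀ x ∈ Y, g ∘ x ∈ Y := by
  obtain ⟨φ, rfl⟩ := h
  obtain ⟨U, C, hU, hC, hφ⟩ := φ.exists_finite_realize_comp_iff (M := M)
    (hL.isEmpty_withConstants_functions_succ A) (fun _ => hL.isEmpty_withConstants_relations A)
  refine ⟨U, C, hU, hC, fun g hg x hx => ?_⟩
  have hdefault : (g ∘ default : Fin 0 → M) = default := Subsingleton.elim _ _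
  change BoundedFormula.Realize φ (g ∘ x) default
  rw [← hdefault, hφ g hg]
  exact hx

theorem MutuallyAlgebraic.finite_setOf_exists_apply_eq {lam : Type*} {k : ℕ}
    {Y : Set (Fin k → lam)} (hY : MutuallyAlgebraic Y) (b : lam) :
    {x ∈ Y | ∃ i, x i = b}.Finite :=
  (hY.choose_spec b).1

section SwapInvariant

variable {lam κ : Type*} [DecidableEq lam] {k : ℕ} {Y : Set (Fin k → lam)} {color : lam → κ}
  {C : Set lam}

theorem infinite_setOf_exists_apply_eq_of_swap_mem
    (hswap : ∀ a c, a ∉ C → c ∉ C → color a = color c → ∀ x ∈ Y, Equiv.swap a c ∘ x ∈ Y)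
    (hC : C.Finite) {x : Fin k → lam} (hx : x ∈ Y) {i j : Fin k} (hxi : x i ∉ C)
    (hclass : {c | color c = color (x i)}.Infinite) (hji : x j ≠ x i) :
    {z ∈ Y | ∃ l, z l = x j}.Infinite := by
  refine Set.infinite_of_injOn_mapsTo (f := fun c => Equiv.swap (x i) c ∘ x)
    (s := {c | color c = color (x i)} \ (C ∪ Set.range x)) ?_ ?_
    (hclass.sdiff (hC.union (Set.finite_range x)))
  · intro c₁ _ c₂ _ h
    simpa using congrFun h i
  · rintro c ⟨hcolor, hc⟩
    rw [Set.mem_union, not_or] at hc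
    refine ⟨hswap _ _ hxi hc.1 hcolor.symm x hx, j, Equiv.swap_apply_of_ne_of_ne hji ?_⟩
    exact fun h => hc.2 ⟨j, h⟩

theorem finite_diff_delta_of_swap_mem [Finite κ]
    (hswap : ∀ a c, a ∉ C → c ∉ C → color a = color c → ∀ x ∈ Y, Equiv.swap a c ∘ x ∈ Y)
    (hC : C.Finite) (hY : ∀ b, {z ∈ Y | ∃ l, z l = b}.Finite) : (Y \ Delta lam k).Finite := by
  set B := {a | {c | color c = color a}.Finite}
  have hB : B.Finite :=
    (Set.finite_iUnion fun p : {p // (color ⁻¹' {p}).Finite} => p.2).subset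
      fun a ha => Set.mem_iUnion.2 ⟨⟨color a, ha⟩, rfl⟩
  refine (Set.Finite.pi fun _ => hC.union hB).subset fun x ⟨hx, hxΔ⟩ i _ => ?_
  by_contra hxi
  rw [Set.mem_union, not_or] at hxi
  obtain ⟨j, hji⟩ : ∃ j, x j ≠ x i := by
    by_contra! h
    exact hxΔ fun j l => (h j).trans (h l).symm
  exact infinite_setOf_exists_apply_eq_of_swap_mem hswap hC hx hxi.1 hxi.2 hji (hY (x j))

end SwapInvariant

open FirstOrder.Language Structure in
theorem MonadicallyDefinable.finite_diff_delta.{u, v, w} {lam : Type w} {k : ℕ}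
    {Y : Set (Fin k → lam)} (hY : MutuallyAlgebraic Y) (h : MonadicallyDefinable.{u, v} Y) :
    (Y \ Delta lam k).Finite := by
  classical
  obtain ⟨L, hL, _, hdef⟩ := h
  obtain ⟨U, C, hU, hC, hinv⟩ := hdef.exists_finite_isSymmetryOn_comp_mem hL
  have : Finite U := hU.to_subtype
  refine finite_diff_delta_of_swap_mem (color := fun a (R : U) => RelMap R.1 fun _ => a)
    (fun a c ha hc hac => hinv _ (isSymmetryOn_swap ha hc fun R hR => ?_)) hC
    hY.finite_setOf_exists_apply_eq
  exact iff_of_eq (congrFun hac ⟨R, hR⟩)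

namespace FirstOrder.Language

inductive UnaryRelSymbol : ℕ → Type v
  | pred : UnaryRelSymbol 1

def unaryLanguage.{u, v} : Language.{u, v} := ⟨fun _ => PEmpty, UnaryRelSymbol⟩

theorem isMonadicLanguage_unaryLanguage : IsMonadicLanguage unaryLanguage.{u, v} :=
  ⟨fun _ => inferInstanceAs (IsEmpty PEmpty), fun _ hn => ⟨fun r => by cases r; exact hn rfl⟩⟩

abbrev unaryStructure.{u, v, w} {M : Type w} (s : Set M) : unaryLanguage.{u, v}.Structure M where
  funMap f := PEmpty.elim f
  RelMap | .pred, xs => xs 0 ∈ s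

variable {L : Language} {M : Type*} [L.Structure M] {α : Type*}

theorem definable_setOf_relMap (A : Set M) (R : L.Relations 1) (i : α) :
    A.Definable L {x : α → M | Structure.RelMap R ![x i]} :=
  (Set.empty_definable_iff.2 ⟨R.formula₁ (Term.var i), by ext; simp⟩).mono (Set.empty_subset A)

theorem definable_setOf_forall_apply_eq (A : Set M) (i₀ : α) [Finite α] :
    A.Definable L {x : α → M | ∀ i, x i = x i₀} := by
  simp only [Set.ofPred_forall]
  exact Set.definable_iInter_of_finite fun i => ⟨(Term.var i).equal (Term.var i₀), rfl⟩

theorem definable_singleton_of_forall_mem {A : Set M} [Finite α] {y : α → M} (hy : ∀ i, y i ∈ A) :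
    A.Definable L {y} := by
  have : {y} = ⋂ i, {x : α → M | x i = y i} := by ext; simp [funext_iff]
  rw [this]
  exact Set.definable_iInter_of_finite fun i =>
    ⟨(Term.var i).equal (L.con ⟨y i, hy i⟩).term, by ext; simp⟩

theorem _root_.Set.Finite.univ_definable [Finite α] {Y : Set (α → M)} (hY : Y.Finite) :
    (Set.univ : Set M).Definable L Y := by
  simpa using Set.definable_biUnion_finset (fun y =>
    definable_singleton_of_forall_mem (L := L) (y := y) fun i => Set.mem_univ (y i)) hY.toFinset

end FirstOrder.Language

open FirstOrder.Language in
theorem monadicallyDefinable_of_finite_diff_delta.{u, v, w} {lam : Type w} {k : ℕ} (hk : 0 < k)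
    {Y : Set (Fin k → lam)} (hY : (Y \ Delta lam k).Finite) : MonadicallyDefinable.{u, v} Y := by
  set s := {a : lam | (fun _ => a) ∈ Y}
  let i₀ : Fin k := ⟨0, hk⟩
  have hsplit : Y = (Y \ Delta lam k) ∪ ({x | ∀ i, x i = x i₀} ∩ {x | x i₀ ∈ s}) := by
    ext x
    have hconst : (∀ i, x i = x i₀) → (fun _ => x i₀) = x := fun h => funext fun i => (h i).symm
    constructor
    · intro hx
      by_cases hxΔ : x ∈ Delta lam k
      · have h : ∀ i, x i = x i₀ := fun i => hxΔ i i₀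
        exact Or.inr ⟨h, show (fun _ => x i₀) ∈ Y from hconst h ▸ hx⟩
      · exact Or.inl ⟨hx, hxΔ⟩
    · rintro (⟨hx, -⟩ | ⟨h, hx⟩)
      · exact hx
      · exact hconst h ▸ hx
  let _ := unaryStructure.{u, v} s
  refine ⟨unaryLanguage, isMonadicLanguage_unaryLanguage, unaryStructure s, ?_⟩
  rw [hsplit]
  exact hY.univ_definable.union ((definable_setOf_forall_apply_eq _ i₀).inter
    (definable_setOf_relMap (L := unaryLanguage) _ .pred i₀))

theorem stmt0.{u, v, w} {lam : Type w} [Infinite lam] {k : ℕ} (hk : 2 ≤ k)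
    {Y : Set (Fin k → lam)} (hY : MutuallyAlgebraic Y) :
    MonadicallyDefinable.{u, v} Y ↔ (Y \ Delta lam k).Finite :=
  ⟨MonadicallyDefinable.finite_diff_delta hY, monadicallyDefinable_of_finite_diff_delta (by omega)⟩
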